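/- Let M_1, …, M_m : ℝ^n → ℝ^n be paracontractions with respect to a norm ‖·‖ on ℝ^n, let y* be a common fixed point of M_1, …, M_m, and let S(1), …, S(q) be m × m stochastic matrices with entries s_ij(t). For arbitrary v_1(0), …, v_m(0) ∈ ℝ^n define v_i(t+1) = ∑_{j=1}^m s_ij(t+1) M_j(v_j(t)) for 0 ≤ t < q, and define Φ(t,τ) = S(t)S(t−1)⋯S(τ+1) for 0 ≤ τ < t ≤ q with Φ(t,t) = I, writing φ_ij(t,τ) for its entries. Fix i ∈ {1,…,m}. If there exist t with 0 ≤ t < q and j ∈ {1,…,m} such that φ_ij(q,t) > 0 and M_j(v_j(t)) ≠ v_j(t), then ‖v_i(q) − y*‖ < ∑_{p=1}^m φ_ip(q,0) ‖v_p(0) − y*‖. -/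

import Mathlib

open Filter Topology Finset
open scoped ENNReal

def IsNormOn {E : Type*} [AddCommGroup E] [Module ℝ E] (N : E → ℝ) : Prop :=
  (∀ x, N x = 0 ↔ x = 0) ∧
  (∀ (c : ℝ) (x : E), N (c • x) = |c| * N x) ∧
  (∀ x y : E, N (x + y) ≤ N x + N y)

def IsParacontraction {E : Type*} [AddCommGroup E] [Module ℝ E] [TopologicalSpace E]
    (N : E → ℝ) (P : E → E) : Prop :=
  Continuous P ∧ ∀ x y : E, P x ≠ x → P y = y → N (P x - y) < N (x - y)

def QuasiNonexpansive {E : Type*} [AddCommGroup E] (N : E → ℝ) (P : E → E) : Prop :=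
  ∀ x y : E, P y = y → N (P x - y) ≤ N (x - y)

noncomputable def pnorm {n : ℕ} (p : ℝ) (x : Fin n → ℝ) : ℝ :=
  (∑ i, |x i| ^ p) ^ (1 / p)

noncomputable def pnormE {n : ℕ} (p : ℝ≥0∞) (x : Fin n → ℝ) : ℝ :=
  if p = ⊤ then ⨆ i, |x i| else (∑ i, |x i| ^ p.toReal) ^ (1 / p.toReal)

noncomputable def mixed22 {m n : ℕ} (x : Fin m → Fin n → ℝ) : ℝ :=
  pnorm 2 (fun i => pnorm 2 (x i))

noncomputable def mixedPInf {m n : ℕ} (p : ℝ) (x : Fin m → Fin n → ℝ) : ℝ :=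
  ⨆ i, pnorm p (x i)

noncomputable def mixedEInf {m n : ℕ} (p : ℝ≥0∞) (x : Fin m → Fin n → ℝ) : ℝ :=
  ⨆ i, pnormE p (x i)

def IsStochastic {m : ℕ} (S : Matrix (Fin m) (Fin m) ℝ) : Prop :=
  (∀ i j, 0 ≤ S i j) ∧ ∀ i, ∑ j, S i j = 1

def IsDoublyStochastic {m : ℕ} (S : Matrix (Fin m) (Fin m) ℝ) : Prop :=
  IsStochastic S ∧ ∀ j, ∑ i, S i j = 1

def kron {m n : ℕ} (S : Matrix (Fin m) (Fin m) ℝ) (x : Fin m → Fin n → ℝ) :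
    Fin m → Fin n → ℝ :=
  fun i => ∑ j, S i j • x j

def stackMap {m n : ℕ} (M : Fin m → (Fin n → ℝ) → (Fin n → ℝ)) :
    (Fin m → Fin n → ℝ) → (Fin m → Fin n → ℝ) :=
  fun x i => M i (x i)

def consensusSet (m n : ℕ) : Set (Fin m → Fin n → ℝ) :=
  {x | ∀ i j : Fin m, x i = x j}

def StronglyConnected {V : Type*} (G : V → V → Prop) : Prop :=
  ∀ i j : V, Relation.ReflTransGen G i j

def graphComp {V : Type*} (Gq Gp : V → V → Prop) : V → V → Prop :=
  fun i j => ∃ k, Gp i k ∧ Gq k j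

def composeChain {m : ℕ} (G : ℕ → Fin m → Fin m → Prop) (a : ℕ) :
    ℕ → (Fin m → Fin m → Prop)
  | 0 => G a
  | k + 1 => graphComp (G (a + (k + 1))) (composeChain G a k)

def mapChain {α : Type*} (F : ℕ → α → α) : ℕ → α → α
  | 0 => id
  | k + 1 => F (k + 1) ∘ mapChain F k

noncomputable def Phi {m : ℕ} (S : ℕ → Matrix (Fin m) (Fin m) ℝ) (τ t : ℕ) :
    Matrix (Fin m) (Fin m) ℝ :=
  (List.range (t - τ)).foldl (fun A k => S (τ + k + 1) * A) 1


/-! Write `e_p(s) = N(v_p(s) - y*)`. Since `y*` is fixed by every `M_p`, each paracontraction is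
quasi-nonexpansive towards `y*`, and since the update is a convex combination, `e(s+1) ≤ S(s+1) e(s)`
entrywise; iterating, `e(b) ≤ Φ(b,a) e(a)` (in Lean, `Phi S a b` is the paper's `Φ(b,a)`). At time `t`
the gap `N(M_j(v_j(t)) - y*) < e_j(t)` is strict, and the positive weight `φ_ij(q,t)` carries it
through the nonnegative matrix `Φ(q,t)` to the `i`-th entry. -/

open Matrix

namespace IsNormOn

variable {E : Type*} [AddCommGroup E] [Module ℝ E] {N : E → ℝ}

lemma map_zero (hN : IsNormOn N) : N 0 = 0 := (hN.1 0).2 rfl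

lemma sum_le {ι : Type*} (hN : IsNormOn N) (s : Finset ι) (f : ι → E) :
    N (∑ p ∈ s, f p) ≤ ∑ p ∈ s, N (f p) :=
  Finset.le_sum_of_subadditive N hN.map_zero.le hN.2.2 s f

end IsNormOn

lemma IsParacontraction.quasiNonexpansive {E : Type*} [AddCommGroup E] [Module ℝ E]
    [TopologicalSpace E] {N : E → ℝ} {P : E → E} (hP : IsParacontraction N P) :
    QuasiNonexpansive N P := by
  intro x y hy
  by_cases hx : P x = x
  · rw [hx]
  · exact (hP.2 x y hx hy).le

lemma IsStochastic.apply_sum_smul_sub_le {m : ℕ} {S : Matrix (Fin m) (Fin m) ℝ}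
    (hS : IsStochastic S) {E : Type*} [AddCommGroup E] [Module ℝ E] {N : E → ℝ}
    (hN : IsNormOn N) (x : Fin m → E) (y : E) (k : Fin m) :
    N (∑ p, S k p • x p - y) ≤ (S *ᵥ fun p => N (x p - y)) k := by
  have hconv : ∑ p, S k p • x p - y = ∑ p, S k p • (x p - y) := by
    simp only [smul_sub, Finset.sum_sub_distrib, ← Finset.sum_smul, hS.2 k, one_smul]
  rw [hconv]
  refine (hN.sum_le _ _).trans_eq (Finset.sum_congr rfl fun p _ => ?_)
  rw [hN.2.1, abs_of_nonneg (hS.1 k p)]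

section MulVec

variable {ι ι' : Type*} [Fintype ι'] {A : Matrix ι ι' ℝ}

lemma mulVec_mono_of_nonneg (hA : ∀ k p, 0 ≤ A k p) {x y : ι' → ℝ} (hxy : x ≤ y) :
    A *ᵥ x ≤ A *ᵥ y :=
  fun k => dotProduct_le_dotProduct_of_nonneg_left hxy (hA k)

lemma mulVec_apply_lt_of_nonneg (hA : ∀ k p, 0 ≤ A k p) {x y : ι' → ℝ} (hxy : x ≤ y)
    {k : ι} {j : ι'} (hkj : 0 < A k j) (hj : x j < y j) : (A *ᵥ x) k < (A *ᵥ y) k :=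
  Finset.sum_lt_sum (fun p _ => mul_le_mul_of_nonneg_left (hxy p) (hA k p))
    ⟨j, Finset.mem_univ j, mul_lt_mul_of_pos_left hj hkj⟩

end MulVec

section Transition

variable {m : ℕ} (S : ℕ → Matrix (Fin m) (Fin m) ℝ)

lemma Phi_self (a : ℕ) : Phi S a a = 1 := by
  simp [Phi]

lemma Phi_succ_right {a b : ℕ} (h : a ≤ b) : Phi S a (b + 1) = S (b + 1) * Phi S a b := by
  rw [Phi, show b + 1 - a = b - a + 1 by omega, List.range_succ, List.foldl_append,
    List.foldl_cons, List.foldl_nil, show a + (b - a) + 1 = b + 1 by omega]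
  rfl

lemma Phi_succ_self (a : ℕ) : Phi S a (a + 1) = S (a + 1) := by
  rw [Phi_succ_right S le_rfl, Phi_self, mul_one]

lemma Phi_mul_Phi {a b c : ℕ} (hab : a ≤ b) (hbc : b ≤ c) :
    Phi S b c * Phi S a b = Phi S a c := by
  induction c, hbc using Nat.le_induction with
  | base => rw [Phi_self, one_mul]
  | succ c hbc ih => rw [Phi_succ_right S hbc, Phi_succ_right S (hab.trans hbc), mul_assoc, ih]

variable {S}

lemma Phi_nonneg {a b : ℕ} (hab : a ≤ b) (hS : ∀ s, a < s → s ≤ b → ∀ k p, 0 ≤ S s k p) :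
    ∀ k p, 0 ≤ Phi S a b k p := by
  induction b, hab using Nat.le_induction with
  | base =>
    intro k p
    rw [Phi_self, one_apply]
    split_ifs <;> norm_num
  | succ b hab ih =>
    intro k p
    rw [Phi_succ_right S hab, mul_apply]
    exact Finset.sum_nonneg fun r _ => mul_nonneg (hS (b + 1) (by omega) le_rfl k r)
      (ih (fun s h₁ h₂ => hS s h₁ (by omega)) r p)

lemma le_Phi_mulVec {d : ℕ → Fin m → ℝ} {a b : ℕ} (hab : a ≤ b)
    (hS : ∀ s, a < s → s ≤ b → ∀ k p, 0 ≤ S s k p)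
    (hd : ∀ s, a ≤ s → s < b → d (s + 1) ≤ S (s + 1) *ᵥ d s) :
    d b ≤ Phi S a b *ᵥ d a := by
  induction b, hab using Nat.le_induction with
  | base => rw [Phi_self, one_mulVec]
  | succ b hab ih =>
    calc d (b + 1) ≤ S (b + 1) *ᵥ d b := hd b hab (by omega)
      _ ≤ S (b + 1) *ᵥ (Phi S a b *ᵥ d a) :=
        mulVec_mono_of_nonneg (hS (b + 1) (by omega) le_rfl)
          (ih (fun s h₁ _ => hS s h₁ (by omega)) fun s h₁ _ => hd s h₁ (by omega))
      _ = Phi S a (b + 1) *ᵥ d a := by rw [mulVec_mulVec, Phi_succ_right S hab]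

end Transition

theorem stmt17 {n m : ℕ} (N : (Fin n → ℝ) → ℝ) (hN : IsNormOn N)
    (M : Fin m → (Fin n → ℝ) → (Fin n → ℝ))
    (hpc : ∀ i, IsParacontraction N (M i))
    (ystar : Fin n → ℝ) (hy : ∀ i, M i ystar = ystar)
    (q : ℕ) (S : ℕ → Matrix (Fin m) (Fin m) ℝ)
    (hS : ∀ t, 1 ≤ t → t ≤ q → IsStochastic (S t))
    (v : ℕ → Fin m → Fin n → ℝ)
    (hv : ∀ t, t < q → ∀ i, v (t + 1) i = ∑ j, S (t + 1) i j • M j (v t j))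
    (i : Fin m) (t : ℕ) (ht : t < q) (j : Fin m)
    (hφpos : 0 < Phi S t q i j) (hne : M j (v t j) ≠ v t j) :
    N (v q i - ystar) < ∑ p, Phi S 0 q i p * N (v 0 p - ystar) := by
  set e : ℕ → Fin m → ℝ := fun s p => N (v s p - ystar)
  set u : ℕ → Fin m → ℝ := fun s p => N (M p (v s p) - ystar)
  have hSnn {a b : ℕ} (hb : b ≤ q) : ∀ s, a < s → s ≤ b → ∀ k p, 0 ≤ S s k p :=
    fun s h₁ h₂ => (hS s (by omega) (by omega)).1
  have hu : ∀ s, u s ≤ e s := fun s p => (hpc p).quasiNonexpansive _ _ (hy p)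
  have hstep : ∀ s < q, e (s + 1) ≤ S (s + 1) *ᵥ u s := fun s hs k => by
    simpa only [e, hv s hs k] using
      (hS (s + 1) (by omega) (by omega)).apply_sum_smul_sub_le hN (fun p => M p (v s p)) ystar k
  have hdecay : ∀ s < q, e (s + 1) ≤ S (s + 1) *ᵥ e s := fun s hs =>
    (hstep s hs).trans (mulVec_mono_of_nonneg (hS (s + 1) (by omega) (by omega)).1 (hu s))
  have huj : u t j < e t j := (hpc j).2 _ _ hne (hy j)
  calc e q i ≤ (Phi S (t + 1) q *ᵥ e (t + 1)) i :=
        le_Phi_mulVec ht (hSnn le_rfl) (fun s _ hs => hdecay s hs) i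
    _ ≤ (Phi S (t + 1) q *ᵥ (S (t + 1) *ᵥ u t)) i :=
        mulVec_mono_of_nonneg (Phi_nonneg ht (hSnn le_rfl)) (hstep t ht) i
    _ = (Phi S t q *ᵥ u t) i := by
        rw [mulVec_mulVec, ← Phi_succ_self S t, Phi_mul_Phi S t.le_succ ht]
    _ < (Phi S t q *ᵥ e t) i :=
        mulVec_apply_lt_of_nonneg (Phi_nonneg ht.le (hSnn le_rfl)) (hu t) hφpos huj
    _ ≤ (Phi S t q *ᵥ (Phi S 0 t *ᵥ e 0)) i :=
        mulVec_mono_of_nonneg (Phi_nonneg ht.le (hSnn le_rfl))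
          (le_Phi_mulVec t.zero_le (hSnn ht.le) fun s _ hs => hdecay s (by omega)) i
    _ = (Phi S 0 q *ᵥ e 0) i := by rw [mulVec_mulVec, Phi_mul_Phi S t.zero_le ht.le]
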